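/- Let E be a finite type, let M₁ and M₂ be two matroids with ground set E, let w : E → ℝ be a weight function with w(e) ≥ 0 for all e, and let ≼ be a linear order on E such that e ≼ e' implies w(e) ≥ w(e') (elements are ordered by nonincreasing weight). Suppose S ⊆ E is the output of the greedy algorithm, characterized by: for every e ∈ E, e ∈ S if and only if the set {e' ∈ S : e' ≺ e} ∪ {e} is independent in both M₁ and M₂ (where ≺ is the strict order). Then for every set T ⊆ E that is independent in both M₁ and M₂, one has ∑_{e ∈ T} w(e) ≤ 2 · ∑_{e ∈ S} w(e); that is, the greedy algorithm achieves a 1/2-approximation for maximizing a nonnegative modular (additive) function over the intersection of two matroids. -/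

import Mathlib

/-! Every prefix `S_{≤a}` of the greedy set is independent in both matroids, and every element
`t ≤ a` of `T` lies in the closure of `S_{≤a}` in one of them: either `t ∈ S`, or greedy rejected
`t` because `S_{<t}` already spans it in `M₁` or in `M₂`. An independent set contained in the
closure of `X` has at most `|X|` elements, so `|T_{≤a}| ≤ 2 |S_{≤a}|` for every `a`. As the
weights are nonnegative and decrease along the order, Abel summation turns these prefix bounds
into `w(T) ≤ 2 w(S)`. -/

open Finset

namespace Matroid

variable {α : Type*} {M M₁ M₂ : Matroid α}

theorem Indep.encard_le_encard_of_subset_closure {I X : Set α} (hI : M.Indep I)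
    (hIX : I ⊆ M.closure X) : I.encard ≤ X.encard :=
  calc I.encard ≤ M.eRk (M.closure X) := hI.encard_le_eRk_of_subset hIX
    _ = M.eRk X := M.eRk_closure_eq X
    _ ≤ X.encard := M.eRk_le_encard X

theorem encard_le_two_mul_of_subset_closure_union {I X : Set α} (hI₁ : M₁.Indep I)
    (hI₂ : M₂.Indep I) (hIX : I ⊆ M₁.closure X ∪ M₂.closure X) :
    I.encard ≤ 2 * X.encard := by
  have hsplit : I = (I ∩ M₁.closure X) ∪ (I ∩ M₂.closure X) := by
    rw [← Set.inter_union_distrib_left, Set.inter_eq_left.2 hIX]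
  calc I.encard ≤ (I ∩ M₁.closure X).encard + (I ∩ M₂.closure X).encard := by
        conv_lhs => rw [hsplit]
        exact Set.encard_union_le _ _
    _ ≤ X.encard + X.encard := by
        gcongr ?_ + ?_
        · exact (hI₁.subset Set.inter_subset_left).encard_le_encard_of_subset_closure
            Set.inter_subset_right
        · exact (hI₂.subset Set.inter_subset_left).encard_le_encard_of_subset_closure
            Set.inter_subset_right
    _ = 2 * X.encard := (two_mul _).symm

variable [LinearOrder α]

theorem indep_of_forall_indep_insert_filter_lt {S : Finset α}
    (hS : ∀ e ∈ S, M.Indep ↑(insert e (S.filter (· < e)))) : M.Indep ↑S := by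
  obtain rfl | hne := S.eq_empty_or_nonempty
  · simp
  refine (hS _ (S.max'_mem hne)).subset fun e he ↦ ?_
  obtain heq | hlt := (S.le_max' e he).eq_or_lt
  · simp [heq]
  · simp [mem_coe.1 he, hlt]

theorem mem_closure_filter_le_of_not_indep_insert {S : Finset α} (hS : M.Indep ↑S) {t a : α}
    (ht : t ∈ M.E) (hta : t ≤ a) (hdep : ¬ M.Indep ↑(insert t (S.filter (· < t)))) :
    t ∈ M.closure ↑(S.filter (· ≤ a)) := by
  have hI : M.Indep ↑(S.filter (· < t)) := hS.subset (coe_subset.2 (filter_subset _ _))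
  rw [coe_insert, hI.insert_indep_iff_of_notMem (by simp), Set.mem_sdiff, not_and_not_right]
    at hdep
  have hsub : S.filter (· < t) ⊆ S.filter (· ≤ a) :=
    monotone_filter_right S fun _ _ hx ↦ (hx.trans_le hta).le
  exact M.closure_subset_closure (coe_subset.2 hsub) (hdep ht)

theorem filter_le_subset_closure_union {S T : Finset α} (hS₁ : M₁.Indep ↑S) (hS₂ : M₂.Indep ↑S)
    (hS : ∀ e, M₁.Indep ↑(insert e (S.filter (· < e))) ∧ M₂.Indep ↑(insert e (S.filter (· < e))) →
      e ∈ S)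
    (hT₁ : ↑T ⊆ M₁.E) (hT₂ : ↑T ⊆ M₂.E) (a : α) :
    ↑(T.filter (· ≤ a)) ⊆ M₁.closure ↑(S.filter (· ≤ a)) ∪ M₂.closure ↑(S.filter (· ≤ a)) := by
  intro t ht
  obtain ⟨htT, hta⟩ := mem_filter.1 ht
  by_cases htS : t ∈ S
  · exact .inl (M₁.mem_closure_of_mem' (mem_filter.2 ⟨htS, hta⟩) (hT₁ htT))
  obtain hdep | hdep := not_and_or.1 (mt (hS t) htS)
  · exact .inl (mem_closure_filter_le_of_not_indep_insert hS₁ (hT₁ htT) hta hdep)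
  · exact .inr (mem_closure_filter_le_of_not_indep_insert hS₂ (hT₂ htT) hta hdep)

theorem card_filter_le_le_two_mul {S T : Finset α} (hS₁ : M₁.Indep ↑S) (hS₂ : M₂.Indep ↑S)
    (hS : ∀ e, M₁.Indep ↑(insert e (S.filter (· < e))) ∧ M₂.Indep ↑(insert e (S.filter (· < e))) →
      e ∈ S)
    (hT₁ : M₁.Indep ↑T) (hT₂ : M₂.Indep ↑T) (a : α) :
    #(T.filter (· ≤ a)) ≤ 2 * #(S.filter (· ≤ a)) := by
  have h := encard_le_two_mul_of_subset_closure_union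
    (hT₁.subset (coe_subset.2 (filter_subset _ _))) (hT₂.subset (coe_subset.2 (filter_subset _ _)))
    (filter_le_subset_closure_union hS₁ hS₂ hS hT₁.subset_ground hT₂.subset_ground a)
  rw [Set.encard_coe_eq_coe_finsetCard, Set.encard_coe_eq_coe_finsetCard] at h
  exact_mod_cast h

end Matroid

namespace Finset

variable {α : Type*} [LinearOrder α] {c : ℕ}

theorem sum_le_mul_sum_of_card_filter_le_of_subset {U T S : Finset α} {w : α → ℝ}
    (hw : ∀ a, 0 ≤ w a) (hanti : Antitone w) (hT : T ⊆ U) (hS : S ⊆ U)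
    (h : ∀ a ∈ U, #(T.filter (· ≤ a)) ≤ c * #(S.filter (· ≤ a))) :
    ∑ x ∈ T, w x ≤ c * ∑ x ∈ S, w x := by
  induction U using Finset.induction_on_max generalizing w T S with
  | empty => simp [subset_empty.1 hT, subset_empty.1 hS]
  | insert m U hlt ih =>
    -- peel off the bottom layer, of height `w m`, on which `T` and `S` compare by their sizes
    set v : α → ℝ := fun x ↦ max (w x - w m) 0
    have hv_anti : Antitone v := fun x y hxy ↦ max_le_max_right 0 (by linarith [hanti hxy])
    have hvm : v m = 0 := by simp [v]
    have hle : ∀ x ∈ insert m U, x ≤ m := fun x hx ↦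
      (mem_insert.1 hx).elim le_of_eq fun hx ↦ (hlt x hx).le
    have hsum : ∀ R ⊆ insert m U, ∑ x ∈ R, w x = ∑ x ∈ R.erase m, v x + #R * w m := by
      intro R hR
      have hwv : ∀ x ∈ R, w x = v x + w m := fun x hx ↦ by
        simp [v, max_eq_left (sub_nonneg.2 (hanti (hle x (hR hx))))]
      rw [sum_congr rfl hwv, sum_add_distrib, sum_const, nsmul_eq_mul, sum_erase _ hvm]
    have hcard : #T ≤ c * #S := by
      have hfilter : ∀ R ⊆ insert m U, R.filter (· ≤ m) = R := fun R hR ↦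
        filter_true_of_mem fun x hx ↦ hle x (hR hx)
      simpa [hfilter T hT, hfilter S hS] using h m (mem_insert_self m U)
    have hrest : ∑ x ∈ T.erase m, v x ≤ c * ∑ x ∈ S.erase m, v x := by
      refine ih (fun _ ↦ le_max_right _ _) hv_anti (subset_insert_iff.1 hT)
        (subset_insert_iff.1 hS) fun a ha ↦ ?_
      have hma : ¬ m ≤ a := not_le.2 (hlt a ha)
      rw [filter_erase, filter_erase, erase_eq_of_notMem (by simp [hma]),
        erase_eq_of_notMem (by simp [hma])]
      exact h a (mem_insert_of_mem ha)
    rw [hsum T hT, hsum S hS, mul_add, ← mul_assoc]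
    gcongr
    · exact hw m
    · exact_mod_cast hcard

theorem sum_le_mul_sum_of_card_filter_le {T S : Finset α} {w : α → ℝ}
    (hw : ∀ a, 0 ≤ w a) (hanti : Antitone w)
    (h : ∀ a, #(T.filter (· ≤ a)) ≤ c * #(S.filter (· ≤ a))) :
    ∑ x ∈ T, w x ≤ c * ∑ x ∈ S, w x :=
  sum_le_mul_sum_of_card_filter_le_of_subset hw hanti subset_union_left subset_union_right
    fun a _ ↦ h a

end Finset

theorem stmt_10_general {E : Type*} [LinearOrder E]
    (M₁ M₂ : Matroid E)
    (w : E → ℝ) (hw : ∀ e, 0 ≤ w e)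
    (hord : ∀ e e' : E, e ≤ e' → w e' ≤ w e)
    (S : Finset E)
    (hS : ∀ e : E, e ∈ S ↔
      (M₁.Indep ↑(insert e (S.filter (fun e' => e' < e))) ∧
       M₂.Indep ↑(insert e (S.filter (fun e' => e' < e)))))
    (T : Finset E) (hT₁ : M₁.Indep ↑T) (hT₂ : M₂.Indep ↑T) :
    ∑ e ∈ T, w e ≤ 2 * ∑ e ∈ S, w e := by
  have hS₁ : M₁.Indep ↑S :=
    Matroid.indep_of_forall_indep_insert_filter_lt fun e he ↦ ((hS e).1 he).1
  have hS₂ : M₂.Indep ↑S :=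
    Matroid.indep_of_forall_indep_insert_filter_lt fun e he ↦ ((hS e).1 he).2
  exact_mod_cast sum_le_mul_sum_of_card_filter_le hw (fun _ _ ↦ hord _ _)
    (Matroid.card_filter_le_le_two_mul hS₁ hS₂ (fun e ↦ (hS e).2) hT₁ hT₂)

/-- Greedy 1/2-approximation for maximizing a nonnegative modular function
over the intersection of two matroids: if elements are linearly ordered by
nonincreasing weight and `S` is the greedy output (an element is taken iff
adding it to the previously taken elements stays independent in both
matroids), then every common independent set `T` satisfies
`∑ e ∈ T, w e ≤ 2 ∑ e ∈ S, w e`. -/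
theorem stmt_10 {E : Type*} [Fintype E] [LinearOrder E]
    (M₁ M₂ : Matroid E) (hE₁ : M₁.E = Set.univ) (hE₂ : M₂.E = Set.univ)
    (w : E → ℝ) (hw : ∀ e, 0 ≤ w e)
    (hord : ∀ e e' : E, e ≤ e' → w e' ≤ w e)
    (S : Finset E)
    (hS : ∀ e : E, e ∈ S ↔
      (M₁.Indep ↑(insert e (S.filter (fun e' => e' < e))) ∧
       M₂.Indep ↑(insert e (S.filter (fun e' => e' < e)))))
    (T : Finset E) (hT₁ : M₁.Indep ↑T) (hT₂ : M₂.Indep ↑T) :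
    ∑ e ∈ T, w e ≤ 2 * ∑ e ∈ S, w e :=
  stmt_10_general M₁ M₂ w hw hord S hS T hT₁ hT₂
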